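/- Let φ be the sigmoid function. For every u ∈ ℝ and every ε > 0, there exist c > 0 and σ₀ > 0 such that for all σ ≥ σ₀: β₀(u,σ) − α₀(u,σ)² ≥ c · σ^{−(1+ε)}, i.e., E_{z∼N(u,1)}[φ'(σ·z)²] − (E_{z∼N(u,1)}[φ'(σ·z)])² ≥ c·σ^{−(1+ε)}. -/

import Mathlib

open MeasureTheory ProbabilityTheory

/-- The sigmoid function `φ(x) = 1/(1 + exp(−x))`. -/
noncomputable def phi (x : ℝ) : ℝ := 1 / (1 + Real.exp (-x))

/-- The derivative of the sigmoid, `φ' = φ(1−φ)`. -/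
noncomputable def phi' (x : ℝ) : ℝ := phi x * (1 - phi x)

/-- `α_q(u,σ) = E_{z∼N(u,1)}[φ'(σ·z)·z^q]`. -/
noncomputable def alphaQ (q : ℕ) (u σ : ℝ) : ℝ :=
  ∫ z, phi' (σ * z) * z ^ q ∂(gaussianReal u 1)

/-- `β_q(u,σ) = E_{z∼N(u,1)}[φ'(σ·z)²·z^q]`. -/
noncomputable def betaQ (q : ℕ) (u σ : ℝ) : ℝ :=
  ∫ z, (phi' (σ * z)) ^ 2 * z ^ q ∂(gaussianReal u 1)

/-!
For `σ ≥ 1`, `φ'(σz)` stays above `φ'(1)` on the window `z ∈ [0, 1/σ]`, where the Gaussian density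
is bounded below, so `β₀(u,σ) ≥ c/σ`. On the other hand `φ'(x) = 1/(2 + 2 cosh x) ≤ 2/(1 + x²)`, and
the Gaussian density is at most `1/√(2π)`, so `α₀(u,σ) ≤ √(2π)/σ` and `α₀² = O(σ⁻²)`. Hence
`β₀ - α₀² ≥ c/(2σ) ≥ (c/2) σ^{-(1+ε)}` for large `σ`.
-/

open Real Set NNReal

lemma phi'_eq_inv_two_add_two_mul_cosh (x : ℝ) : phi' x = (2 + 2 * cosh x)⁻¹ := by
  have h : 1 + exp (-x) ≠ 0 := by positivity
  rw [phi', phi, cosh_eq, exp_neg]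
  field_simp
  ring

lemma phi'_pos (x : ℝ) : 0 < phi' x := by
  rw [phi'_eq_inv_two_add_two_mul_cosh]
  exact inv_pos.2 (by linarith [cosh_pos x])

lemma phi'_le_phi'_of_abs_le {x y : ℝ} (h : |x| ≤ |y|) : phi' y ≤ phi' x := by
  simp only [phi'_eq_inv_two_add_two_mul_cosh]
  gcongr
  exact cosh_le_cosh.2 h

lemma phi'_le_two_mul_inv_one_add_sq (x : ℝ) : phi' x ≤ 2 * (1 + x ^ 2)⁻¹ := by
  have hexp := quadratic_le_exp_of_nonneg (abs_nonneg x)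
  have hexp_neg := add_one_le_exp (-|x|)
  rw [phi'_eq_inv_two_add_two_mul_cosh, ← cosh_abs, cosh_eq, ← inv_inv (2 : ℝ), ← mul_inv]
  apply inv_anti₀ (by positivity)
  nlinarith [sq_abs x]

lemma continuous_phi' : Continuous phi' := by
  rw [funext phi'_eq_inv_two_add_two_mul_cosh]
  exact Continuous.inv₀ (by fun_prop) fun x => by linarith [cosh_pos x]

lemma gaussianPDFReal_le_inv_sqrt (μ : ℝ) (v : ℝ≥0) (x : ℝ) :
    gaussianPDFReal μ v x ≤ (√(2 * π * v))⁻¹ := by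
  rw [gaussianPDFReal]
  refine mul_le_of_le_one_right (by positivity) (exp_le_one_iff.2 ?_)
  rw [neg_div]
  exact neg_nonpos.2 (by positivity)

lemma gaussianPDFReal_le_of_abs_sub_le {μ : ℝ} {v : ℝ≥0} {x y : ℝ} (h : |x - μ| ≤ |y - μ|) :
    gaussianPDFReal μ v y ≤ gaussianPDFReal μ v x := by
  simp only [gaussianPDFReal]
  gcongr ?_ * exp (?_ / _)
  exact neg_le_neg (sq_le_sq.2 h)

lemma integral_gaussianReal_le {μ : ℝ} {v : ℝ≥0} (hv : v ≠ 0) {f : ℝ → ℝ} (hf₀ : 0 ≤ f)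
    (hf : Integrable f) : ∫ x, f x ∂gaussianReal μ v ≤ (√(2 * π * v))⁻¹ * ∫ x, f x := by
  rw [integral_gaussianReal_eq_integral_smul hv, ← integral_const_mul]
  refine integral_mono_of_nonneg (ae_of_all _ fun x => ?_) (hf.const_mul _)
    (ae_of_all _ fun x => ?_)
  · exact smul_nonneg (gaussianPDFReal_nonneg μ v x) (hf₀ x)
  · exact mul_le_mul_of_nonneg_right (gaussianPDFReal_le_inv_sqrt μ v x) (hf₀ x)

lemma gaussianPDFReal_mul_le_measureReal_Icc {μ : ℝ} {v : ℝ≥0} (hv : v ≠ 0) {a b y : ℝ}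
    (hab : a ≤ b) (hy : ∀ z ∈ Icc a b, |z - μ| ≤ |y - μ|) :
    gaussianPDFReal μ v y * (b - a) ≤ (gaussianReal μ v).real (Icc a b) := by
  rw [measureReal_def, gaussianReal_apply_eq_integral μ hv,
    ENNReal.toReal_ofReal (setIntegral_nonneg measurableSet_Icc fun z _ =>
      gaussianPDFReal_nonneg μ v z)]
  have h := setIntegral_ge_of_const_le_real measurableSet_Icc (by simp)
    (fun z hz => gaussianPDFReal_le_of_abs_sub_le (v := v) (hy z hz))
    (integrable_gaussianPDFReal μ v).integrableOn
  rw [Real.volume_real_Icc_of_le hab] at h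
  linarith

lemma alphaQ_zero_nonneg (u σ : ℝ) : 0 ≤ alphaQ 0 u σ :=
  integral_nonneg fun z => by simpa using (phi'_pos (σ * z)).le

lemma alphaQ_zero_le (u : ℝ) {σ : ℝ} (hσ : 0 < σ) : alphaQ 0 u σ ≤ √(2 * π) / σ := by
  have hdom : Integrable fun z : ℝ => 2 * (1 + (σ * z) ^ 2)⁻¹ :=
    (integrable_inv_one_add_sq.comp_mul_left' hσ.ne').const_mul 2
  have hint : Integrable fun z => phi' (σ * z) :=
    hdom.mono' (continuous_phi'.comp (continuous_const.mul continuous_id)).aestronglyMeasurable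
      (ae_of_all _ fun z => by
        rw [Real.norm_of_nonneg (phi'_pos _).le]; exact phi'_le_two_mul_inv_one_add_sq _)
  have hlebesgue : ∫ z, phi' (σ * z) ≤ 2 * π / σ := calc
    ∫ z, phi' (σ * z) ≤ ∫ z, 2 * (1 + (σ * z) ^ 2)⁻¹ :=
      integral_mono hint hdom fun z => phi'_le_two_mul_inv_one_add_sq _
    _ = 2 * π / σ := by
      rw [integral_const_mul, Measure.integral_comp_mul_left (fun z => (1 + z ^ 2)⁻¹),
        integral_univ_inv_one_add_sq, abs_of_pos (inv_pos.2 hσ), smul_eq_mul]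
      ring
  have hgauss := integral_gaussianReal_le (μ := u) one_ne_zero (fun z => (phi'_pos _).le) hint
  simp only [alphaQ, pow_zero, mul_one, NNReal.coe_one] at hgauss ⊢
  calc _ ≤ (√(2 * π))⁻¹ * (2 * π / σ) := hgauss.trans (by gcongr)
    _ = √(2 * π) / σ := by
      have h2π : √(2 * π) ^ 2 = 2 * π := sq_sqrt (by positivity)
      field_simp
      rw [h2π]

lemma phi'_one_sq_mul_gaussianPDFReal_div_le_betaQ_zero (u : ℝ) {σ : ℝ} (hσ : 1 ≤ σ) :
    phi' 1 ^ 2 * gaussianPDFReal u 1 (u + 1 + |u|) / σ ≤ betaQ 0 u σ := by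
  have hσ₀ : 0 < σ := one_pos.trans_le hσ
  have hint : Integrable (fun z => phi' (σ * z) ^ 2) (gaussianReal u 1) :=
    Integrable.of_bound
      ((continuous_phi'.comp (continuous_const.mul continuous_id)).pow 2).aestronglyMeasurable
      (phi' 0 ^ 2) (ae_of_all _ fun z => by
        rw [Real.norm_of_nonneg (sq_nonneg _)]
        gcongr
        · exact (phi'_pos _).le
        · exact phi'_le_phi'_of_abs_le (by rw [abs_zero]; exact abs_nonneg _))
  have hnear : ∀ z ∈ Icc 0 σ⁻¹, phi' 1 ^ 2 ≤ phi' (σ * z) ^ 2 := fun z ⟨hz₀, hz₁⟩ => by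
    gcongr
    · exact (phi'_pos _).le
    · refine phi'_le_phi'_of_abs_le ?_
      rw [abs_one, abs_of_nonneg (by positivity)]
      exact (mul_le_mul_of_nonneg_left hz₁ hσ₀.le).trans_eq (mul_inv_cancel₀ hσ₀.ne')
  have hmass : gaussianPDFReal u 1 (u + 1 + |u|) * σ⁻¹ ≤ (gaussianReal u 1).real (Icc 0 σ⁻¹) := by
    have h := gaussianPDFReal_mul_le_measureReal_Icc (μ := u) (a := 0) (b := σ⁻¹)
      (y := u + 1 + |u|) one_ne_zero (by positivity) fun z ⟨hz₀, hz₁⟩ => by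
        have hz : z ≤ 1 := hz₁.trans (inv_le_one_of_one_le₀ hσ)
        rw [show u + 1 + |u| - u = 1 + |u| by ring,
          abs_of_nonneg (show (0 : ℝ) ≤ 1 + |u| by positivity), abs_sub_le_iff]
        constructor <;> linarith [le_abs_self u, neg_abs_le u]
    rwa [sub_zero] at h
  calc phi' 1 ^ 2 * gaussianPDFReal u 1 (u + 1 + |u|) / σ
      ≤ phi' 1 ^ 2 * (gaussianReal u 1).real (Icc 0 σ⁻¹) := by
        rw [mul_div_assoc, div_eq_mul_inv]; gcongr
    _ ≤ ∫ z in Icc 0 σ⁻¹, phi' (σ * z) ^ 2 ∂gaussianReal u 1 := by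
        have := setIntegral_ge_of_const_le_real measurableSet_Icc (measure_ne_top _ _) hnear
          hint.integrableOn
        linarith
    _ ≤ betaQ 0 u σ := by
        simp only [betaQ, pow_zero, mul_one]
        exact setIntegral_le_integral hint (ae_of_all _ fun z => sq_nonneg _)

theorem stmt_9 (u : ℝ) (ε : ℝ) (hε : 0 < ε) :
    ∃ c > 0, ∃ σ₀ > 0, ∀ σ : ℝ, σ₀ ≤ σ →
      betaQ 0 u σ - (alphaQ 0 u σ) ^ 2 ≥ c * σ ^ (-(1 + ε)) := by
  set c := phi' 1 ^ 2 * gaussianPDFReal u 1 (u + 1 + |u|)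
  have hc : 0 < c := mul_pos (pow_pos (phi'_pos 1) 2) (gaussianPDFReal_pos _ _ _ one_ne_zero)
  refine ⟨c / 2, by positivity, max 1 (4 * π / c), by positivity, fun σ hσ => ?_⟩
  have hσ₁ : 1 ≤ σ := le_of_max_le_left hσ
  have hσc : 4 * π ≤ c * σ := (div_le_iff₀' hc).1 (le_of_max_le_right hσ)
  have hσ₀ : 0 < σ := one_pos.trans_le hσ₁
  have hβ := phi'_one_sq_mul_gaussianPDFReal_div_le_betaQ_zero u hσ₁
  have hα : alphaQ 0 u σ ^ 2 ≤ 2 * π / σ ^ 2 := by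
    calc alphaQ 0 u σ ^ 2 ≤ (√(2 * π) / σ) ^ 2 := by
          gcongr
          · exact alphaQ_zero_nonneg u σ
          · exact alphaQ_zero_le u hσ₀
      _ = 2 * π / σ ^ 2 := by rw [div_pow, sq_sqrt (by positivity)]
  have hrpow : σ ^ (-(1 + ε)) ≤ σ⁻¹ := by
    simpa [Real.rpow_neg_one] using
      Real.rpow_le_rpow_of_exponent_le hσ₁ (show -(1 + ε) ≤ -1 by linarith)
  have hgap : c / 2 * σ⁻¹ ≤ c / σ - 2 * π / σ ^ 2 := by
    rw [div_sub_div _ _ hσ₀.ne' (by positivity), le_div_iff₀ (by positivity)]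
    field_simp
    nlinarith
  calc c / 2 * σ ^ (-(1 + ε)) ≤ c / 2 * σ⁻¹ := by gcongr
    _ ≤ betaQ 0 u σ - alphaQ 0 u σ ^ 2 := by linarith
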